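/- Combining the previous two statements: under the same setup, the neighborhood of a vertex i together with i forms a clique in the perturbed graph G^U if and only if i is a leaf of T or i is a corrupt node (i ∈ Y). -/

import Mathlib

open SimpleGraph

/-- A leaf of a graph: a vertex with exactly one neighbor. -/
def IsLeaf {V : Type*} (G : SimpleGraph V) (i : V) : Prop := ∃! j, G.Adj i j

/-- The moral graph of `G`: vertices at distance 1 or 2 are joined. -/
def moral {V : Type*} (G : SimpleGraph V) : SimpleGraph V where
  Adj i j := i ≠ j ∧ G.dist i j ≤ 2
  symm := by
    constructor
    rintro i j ⟨h1, h2⟩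
    exact ⟨h1.symm, by rwa [SimpleGraph.dist_comm]⟩
  loopless := by constructor; rintro i ⟨h, -⟩; exact h rfl

/-- The perturbed graph: `i ~ j` iff there is a walk in the moral graph from `i` to `j`
all of whose intermediate vertices lie in the corrupt set `Y` (moral edges are included,
via the length-one walk). -/
def perturbed {V : Type*} (G : SimpleGraph V) (Y : Set V) : SimpleGraph V where
  Adj i j := i ≠ j ∧ ∃ p : (moral G).Walk i j, ∀ v ∈ p.support, v ≠ i → v ≠ j → v ∈ Y
  symm := by
    constructor
    rintro i j ⟨hne, p, hp⟩
    refine ⟨hne.symm, p.reverse, ?_⟩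
    intro v hv hvi hvj
    rw [SimpleGraph.Walk.support_reverse, List.mem_reverse] at hv
    exact hp v hv hvj hvi
  loopless := by constructor; rintro i ⟨h, -⟩; exact h rfl

section Aux
variable {V : Type*} {T : SimpleGraph V}

/-- In a tree, the distance equals the length of any path. -/
lemma tree_dist_eq {u v : V} (hT : T.IsTree) (p : T.Walk u v) (hp : p.IsPath) :
    T.dist u v = p.length := by
  obtain ⟨q, hq, hq'⟩ := hT.isConnected.exists_path_of_dist u v
  have h : q = p := (hT.existsUnique_path u v).unique hq hp
  rw [← hq', h]

/-- In a tree, every walk contains the support of the unique path. -/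
lemma tree_path_support_subset [DecidableEq V] {u v : V} (hT : T.IsTree) (p : T.Walk u v) (hp : p.IsPath)
    (q : T.Walk u v) : p.support ⊆ q.support := by
  have h : p = q.bypass := (hT.existsUnique_path u v).unique hp q.bypass_isPath
  rw [h]; exact q.support_bypass_subset

lemma dist_split [DecidableEq V] {G : SimpleGraph V} {u v x : V} (q : G.Walk u v) (hx : x ∈ q.support) :
    G.dist u x + G.dist x v ≤ q.length := by
  have h := congrArg SimpleGraph.Walk.length (q.take_spec hx)
  rw [SimpleGraph.Walk.length_append] at h
  calc G.dist u x + G.dist x v ≤ (q.takeUntil x hx).length + (q.dropUntil x hx).length :=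
        Nat.add_le_add (dist_le _) (dist_le _)
    _ = q.length := h

lemma dist_of_cherry (hT : T.IsTree) {x a y : V} (h1 : T.Adj x a) (h2 : T.Adj a y)
    (hxy : x ≠ y) : T.dist x y = 2 := by
  have hp : (Walk.cons h1 (Walk.cons h2 Walk.nil)).IsPath := by
    simp [Walk.isPath_def, h1.ne, h2.ne, hxy]
  rw [tree_dist_eq hT _ hp]
  simp

lemma dist_of_path3 (hT : T.IsTree) {x a b y : V} (h1 : T.Adj x a) (h2 : T.Adj a b)
    (h3 : T.Adj b y) (hxb : x ≠ b) (hxy : x ≠ y) (hay : a ≠ y) : T.dist x y = 3 := by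
  have hp : (Walk.cons h1 (Walk.cons h2 (Walk.cons h3 Walk.nil))).IsPath := by
    simp [Walk.isPath_def, h1.ne, h2.ne, h3.ne, hxb, hxy, hay]
  rw [tree_dist_eq hT _ hp]
  simp

lemma perturbed_of_moral {G : SimpleGraph V} {Y : Set V} {u v : V} (h : (moral G).Adj u v) :
    (perturbed G Y).Adj u v := by
  refine ⟨h.ne, Walk.cons h Walk.nil, ?_⟩
  intro x hx hxu hxv
  simp only [Walk.support_cons, Walk.support_nil, List.mem_cons,
    List.not_mem_nil, or_false] at hx
  rcases hx with rfl | rfl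
  · exact absurd rfl hxu
  · exact absurd rfl hxv

/-- Decomposition of a walk in the moral graph with corrupt interior. -/
lemma decomp [DecidableEq V] {Y : Set V}
    (hYnm : ∀ u ∈ Y, ∀ v ∈ Y, u ≠ v → ¬ (moral T).Adj u v) :
    ∀ n : ℕ, ∀ {x z : V} (p : (moral T).Walk x z), p.length ≤ n →
      (∀ v ∈ p.support, v ≠ x → v ≠ z → v ∈ Y) →
      x = z ∨ (moral T).Adj x z ∨
        ∃ y ∈ Y, y ≠ x ∧ y ≠ z ∧ (moral T).Adj x y ∧ (moral T).Adj y z := by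
  intro n
  induction n with
  | zero =>
    intro x z p hlen _
    exact Or.inl (Walk.eq_of_length_eq_zero (Nat.le_zero.mp hlen))
  | succ n ih =>
    intro x z p hlen hsupp
    cases p with
    | nil => exact Or.inl rfl
    | @cons _ v _ h q =>
      by_cases hvz : v = z
      · subst hvz; exact Or.inr (Or.inl h)
      have hvx : v ≠ x := h.ne'
      have hvY : v ∈ Y := by
        refine hsupp v ?_ hvx hvz
        rw [Walk.support_cons]
        exact List.mem_cons_of_mem _ q.start_mem_support
      by_cases hx : x ∈ q.support
      · have hlen' : (q.dropUntil x hx).length ≤ n := by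
          have h1 := q.length_dropUntil_le hx
          have h2 : q.length + 1 ≤ n + 1 := by
            rw [← Walk.length_cons]; exact hlen
          omega
        refine ih (q.dropUntil x hx) hlen' ?_
        intro u hu hux huz
        refine hsupp u ?_ hux huz
        rw [Walk.support_cons]
        exact List.mem_cons_of_mem _ (q.support_dropUntil_subset hx hu)
      · cases q with
        | nil => exact absurd rfl hvz
        | @cons _ u _ h2 r =>
          by_cases huz : u = z
          · subst huz
            exact Or.inr (Or.inr ⟨v, hvY, hvx, hvz, h, h2⟩)
          · have hux : u ≠ x := by
              intro e
              apply hx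
              rw [← e, Walk.support_cons]
              exact List.mem_cons_of_mem _ r.start_mem_support
            have huY : u ∈ Y := by
              refine hsupp u ?_ hux huz
              rw [Walk.support_cons, Walk.support_cons]
              exact List.mem_cons_of_mem _ (List.mem_cons_of_mem _ r.start_mem_support)
            exact absurd h2 (hYnm v hvY u huY h2.ne)
end Aux

/-- `i` together with its perturbed-graph neighborhood is a clique in the
perturbed graph if and only if `i` is a leaf of the tree or a corrupt node. -/
theorem stmt_5 {V : Type*} (T : SimpleGraph V) (hT : T.IsTree) (Y : Set V)
    (hYY : ∀ x ∈ Y, ∀ y ∈ Y, x ≠ y → 3 ≤ T.dist x y)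
    (hYL : ∀ y ∈ Y, ∀ l, IsLeaf T l → 3 ≤ T.dist y l)
    (h2hop : ∀ v : V, ∃ w : V, T.dist v w = 2)
    (i : V) :
    (perturbed T Y).IsClique (insert i ((perturbed T Y).neighborSet i)) ↔
      IsLeaf T i ∨ i ∈ Y := by
  classical
  have hconn := hT.isConnected
  have hYnm : ∀ u ∈ Y, ∀ v ∈ Y, u ≠ v → ¬ (moral T).Adj u v := by
    intro u hu v hv huv h
    have h3 := hYY u hu v hv huv
    have h2 : T.dist u v ≤ 2 := h.2
    omega
  constructor
  · -- forward direction
    intro hcl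
    by_contra hcon
    push_neg at hcon
    obtain ⟨hnl, hnY⟩ := hcon
    have second : ∀ a, T.Adj i a → ∃ b, T.Adj i b ∧ b ≠ a := by
      intro a ha
      by_contra hb; push_neg at hb
      exact hnl ⟨a, ha, hb⟩
    -- cherry from h2hop
    obtain ⟨w0, hw0⟩ := h2hop i
    obtain ⟨p0, hp0, hp0len⟩ := hconn.exists_path_of_dist i w0
    rw [hw0] at hp0len
    have hcherry : ∃ a w, T.Adj i a ∧ T.Adj a w ∧ w ≠ i := by
      cases p0 with
      | nil => simp at hp0len
      | @cons _ s _ h q =>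
        cases q with
        | nil => simp at hp0len
        | @cons _ t _ h2 r =>
          cases r with
          | nil =>
            refine ⟨s, w0, h, h2, ?_⟩
            intro e; rw [e] at hw0; simp [SimpleGraph.dist_self] at hw0
          | cons h3 r' => simp [Walk.length_cons] at hp0len
    -- find a good neighbor a ∉ Y with an outside neighbor w
    have exa : ∃ a w, T.Adj i a ∧ a ∉ Y ∧ T.Adj a w ∧ w ≠ i := by
      by_contra hno
      push_neg at hno
      obtain ⟨a0, w1, hia0, ha0w1, hw1i⟩ := hcherry
      have ha0Y : a0 ∈ Y := by
        by_contra hy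
        exact hw1i (hno a0 w1 hia0 hy ha0w1)
      obtain ⟨b, hib, hba0⟩ := second a0 hia0
      have hdab : T.dist a0 b = 2 := dist_of_cherry hT hia0.symm hib hba0.symm
      by_cases hbY : b ∈ Y
      · have := hYY a0 ha0Y b hbY hba0.symm
        omega
      · have hbl : IsLeaf T b := by
          refine ⟨i, hib.symm, ?_⟩
          intro j hj
          by_contra hji
          exact hji (hno b j hib hbY hj)
        have := hYL a0 ha0Y b hbl
        omega
    obtain ⟨a, w, hia, haY, haw, hwi⟩ := exa
    obtain ⟨b, hib, hba⟩ := second a hia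
    have hdiw : T.dist i w = 2 := dist_of_cherry hT hia haw hwi.symm
    have hdib : T.dist i b = 1 := dist_eq_one_iff_adj.mpr hib
    have hwb : w ≠ b := by
      intro e; rw [e] at hdiw; omega
    have hdwb : T.dist w b = 3 :=
      dist_of_path3 hT haw.symm hia.symm hib hwi hwb hba.symm
    have hw_mem : w ∈ insert i ((perturbed T Y).neighborSet i) := by
      simp only [Set.mem_insert_iff, mem_neighborSet]
      exact Or.inr (perturbed_of_moral ⟨hwi.symm, by omega⟩)
    have hb_mem : b ∈ insert i ((perturbed T Y).neighborSet i) := by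
      simp only [Set.mem_insert_iff, mem_neighborSet]
      exact Or.inr (perturbed_of_moral ⟨hib.ne, by omega⟩)
    obtain ⟨-, p, hp⟩ := hcl hw_mem hb_mem hwb
    rcases decomp hYnm p.length p le_rfl hp with e | hm | ⟨y, hyY, hyw, hyb, hm1, hm2⟩
    · exact hwb e
    · have := hm.2; omega
    · have hyi : y ≠ i := fun e => hnY (e ▸ hyY)
      have hya : y ≠ a := fun e => haY (e ▸ hyY)
      have hd1 : T.dist w y ≤ 2 := hm1.2
      have hd2 : T.dist y b ≤ 2 := hm2.2
      obtain ⟨q1, hq1⟩ := (hconn w y).exists_walk_length_eq_dist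
      obtain ⟨q2, hq2⟩ := (hconn y b).exists_walk_length_eq_dist
      have hPpath : (Walk.cons haw.symm (Walk.cons hia.symm (Walk.cons hib Walk.nil))).IsPath := by
        simp [Walk.isPath_def, haw.ne', hia.ne, hia.ne', hib.ne, hib.ne', hwi, hwb, hba, hba.symm]
      have hsub := tree_path_support_subset hT _ hPpath (q1.append q2)
      have hiq : i ∈ (q1.append q2).support := hsub (by simp)
      have haq : a ∈ (q1.append q2).support := hsub (by simp)
      rw [Walk.mem_support_append_iff] at hiq haq
      have hyi_adj : T.Adj y i := by
        rcases hiq with h1 | h2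
        · have hs := dist_split q1 h1
          rw [hq1] at hs
          have hdwi : T.dist w i = 2 := by rw [SimpleGraph.dist_comm]; exact hdiw
          have h0 : T.dist i y = 0 := by omega
          exact absurd ((hconn.dist_eq_zero_iff).mp h0) (Ne.symm hyi)
        · have hs := dist_split q2 h2
          rw [hq2] at hs
          have h1 : T.dist y i ≤ 1 := by omega
          have h0 : T.dist y i ≠ 0 := fun e => hyi ((hconn.dist_eq_zero_iff).mp e)
          exact dist_eq_one_iff_adj.mp (by omega)
      rcases haq with h1 | h2
      · have hs := dist_split q1 h1
        rw [hq1] at hs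
        have hdwa : T.dist w a = 1 := dist_eq_one_iff_adj.mpr haw.symm
        have h0 : T.dist a y ≠ 0 := fun e => hya (((hconn.dist_eq_zero_iff).mp e).symm)
        have hay1 : T.dist a y = 1 := by omega
        have hay2 : T.dist a y = 2 := dist_of_cherry hT hia.symm hyi_adj.symm hya.symm
        omega
      · have hs := dist_split q2 h2
        rw [hq2] at hs
        have hdab : T.dist a b = 2 := dist_of_cherry hT hia.symm hib hba.symm
        have hdba : T.dist b a = 2 := by rw [SimpleGraph.dist_comm]; exact hdab
        have h0 : T.dist y a = 0 := by omega
        exact hya ((hconn.dist_eq_zero_iff).mp h0)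
  · -- backward direction
    rintro (hleaf | hiY) x hx z hz hxz
    · -- leaf case
      obtain ⟨u, hu, huniq⟩ := hleaf
      have key : ∀ x, (perturbed T Y).Adj i x → T.dist u x ≤ 1 := by
        intro x hx
        obtain ⟨hne, p, hp⟩ := hx
        rcases decomp hYnm p.length p le_rfl hp with e | hm | ⟨y, hyY, -, -, hm1, -⟩
        · exact absurd e hne
        · have hd : T.dist i x ≤ 2 := hm.2
          obtain ⟨p', hp'path, hp'len⟩ := hconn.exists_path_of_dist i x
          cases p' with
          | nil => exact absurd rfl hne
          | @cons _ s _ h q =>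
            have hs : s = u := huniq s h
            subst hs
            cases q with
            | nil => simp [SimpleGraph.dist_self]
            | @cons _ t _ h2 r =>
              cases r with
              | nil => exact le_of_eq (dist_eq_one_iff_adj.mpr h2)
              | cons h3 r' =>
                rw [← hp'len] at hd
                simp [Walk.length_cons] at hd
        · have h3 := hYL y hyY i ⟨u, hu, huniq⟩
          have h2 : T.dist i y ≤ 2 := hm1.2
          rw [SimpleGraph.dist_comm] at h3
          omega
      simp only [Set.mem_insert_iff, mem_neighborSet] at hx hz
      rcases hx with rfl | hx
      · rcases hz with rfl | hz
        · exact absurd rfl hxz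
        · exact hz
      rcases hz with rfl | hz
      · exact hx.symm
      · have h1 := key x hx
        have h2 := key z hz
        have hd : T.dist x z ≤ 2 := by
          have ht := hconn.dist_triangle (u := x) (v := u) (w := z)
          rw [SimpleGraph.dist_comm (u := x) (v := u)] at ht
          omega
        exact perturbed_of_moral ⟨hxz, hd⟩
    · -- corrupt case
      simp only [Set.mem_insert_iff, mem_neighborSet] at hx hz
      rcases hx with rfl | hx
      · rcases hz with rfl | hz
        · exact absurd rfl hxz
        · exact hz
      rcases hz with rfl | hz
      · exact hx.symm
      · obtain ⟨-, p, hp⟩ := hx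
        obtain ⟨-, q, hq⟩ := hz
        refine ⟨hxz, p.reverse.append q, ?_⟩
        intro v hv hvx hvz
        rw [Walk.mem_support_append_iff] at hv
        rcases hv with hv | hv
        · rw [Walk.support_reverse, List.mem_reverse] at hv
          by_cases hvi : v = i
          · exact hvi ▸ hiY
          · exact hp v hv hvi hvx
        · by_cases hvi : v = i
          · exact hvi ▸ hiY
          · exact hq v hv hvi hvz
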